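/- Let I be a bounded interval and (W_n) a sequence of graphons with values in I. Suppose 0 ≤ h₁ < h₂ ≤ 1. If for every q ≥ 1 and every symmetric q×q matrix J the sequence (E^{h₂/q}(W_n, J))_n converges, then for every q ≥ 1 and every symmetric q×q matrix J the sequence (E^{h₁/q}(W_n, J))_n converges. -/

import Mathlib

/-!
The threshold-`h₁ / q` energy of `(W, J)` is compared with threshold-`h₂ / N` energies of the
blow-ups `J.submatrix φ φ` along maps `φ : Fin N → Fin q`. Merging the parts of a fractional
partition along the fibres of `φ` gives `E^{h₁/q}(W, J) ≤ E^{h₂/N}(W, J_φ)` as soon as every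
fibre size `m i` satisfies `h₁ / q ≤ m i * h₂ / N`. Conversely, for `N` large in terms of `q`,
`J`, `h₁`, `h₂`, `ε` and a bound on `W` only, a near-optimal partition can be perturbed at
energy cost `ε / 2` and split evenly along the fibres of such a `φ`, so that
`E^{h₂/N}(W, J_φ) ≤ E^{h₁/q}(W, J) + ε`. Hence `E^{h₁/q}(W_n, J)` stays within `ε`, uniformly
in `n`, of the minimum over the finitely many admissible `φ` of the convergent sequences
`E^{h₂/N}(W_n, J_φ)`, and is therefore Cauchy.
-/

open MeasureTheory Filter

noncomputable section

/-- The unit interval as a subset of ℝ. -/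
def I01 : Set ℝ := Set.Icc 0 1

/-- A `q`-fractional partition: measurable functions `ρ i : [0,1] → [0,1]`
summing pointwise to `1` on `[0,1]`. -/
structure FracPartition (q : ℕ) where
  toFun : Fin q → ℝ → ℝ
  measurable : ∀ i, Measurable (toFun i)
  mem_I01 : ∀ i x, x ∈ I01 → toFun i x ∈ I01
  sum_one : ∀ x ∈ I01, ∑ i, toFun i x = 1

/-- Energy of a fractional partition with respect to a graphon `W` and matrix `J`. -/
def energy {q : ℕ} (W : ℝ → ℝ → ℝ) (J : Matrix (Fin q) (Fin q) ℝ)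
    (ρ : FracPartition q) : ℝ :=
  - ∑ i, ∑ j, J i j * ∫ x in I01, ∫ y in I01, ρ.toFun i x * ρ.toFun j y * W x y

/-- `a` is a probability distribution on `Fin q`. -/
def IsDist {q : ℕ} (a : Fin q → ℝ) : Prop :=
  (∀ i, 0 ≤ a i) ∧ ∑ i, a i = 1

/-- Microcanonical ground state energy. -/
def mgse {q : ℕ} (W : ℝ → ℝ → ℝ) (J : Matrix (Fin q) (Fin q) ℝ) (a : Fin q → ℝ) : ℝ :=
  sInf {e | ∃ ρ : FracPartition q, (∀ i, (∫ x in I01, ρ.toFun i x) = a i) ∧ e = energy W J ρ}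

/-- General lower threshold ground state energy with threshold vector `x`. -/
def ltgseV {q : ℕ} (W : ℝ → ℝ → ℝ) (J : Matrix (Fin q) (Fin q) ℝ) (x : Fin q → ℝ) : ℝ :=
  sInf {e | ∃ a : Fin q → ℝ, IsDist a ∧ (∀ i, x i ≤ a i) ∧ e = mgse W J a}

/-- Homogeneous lower threshold ground state energy with scalar threshold `c`. -/
def ltgse {q : ℕ} (W : ℝ → ℝ → ℝ) (J : Matrix (Fin q) (Fin q) ℝ) (c : ℝ) : ℝ :=
  ltgseV W J (fun _ => c)

/-- Unrestricted ground state energy. -/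
def gse {q : ℕ} (W : ℝ → ℝ → ℝ) (J : Matrix (Fin q) (Fin q) ℝ) : ℝ :=
  sInf {e | ∃ ρ : FracPartition q, e = energy W J ρ}

/-- `W` is a graphon: a bounded symmetric measurable function. -/
def IsGraphon (W : ℝ → ℝ → ℝ) : Prop :=
  Measurable (Function.uncurry W) ∧ (∀ x y, W x y = W y x) ∧ ∃ M, ∀ x y, |W x y| ≤ M

open Finset Function

lemma measurableSet_I01 : MeasurableSet I01 := measurableSet_Icc

instance : IsProbabilityMeasure (volume.restrict I01) :=
  ⟨by rw [Measure.restrict_apply_univ, I01, Real.volume_Icc]; norm_num⟩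

abbrev volumeSquare : Measure (ℝ × ℝ) := (volume.restrict I01).prod (volume.restrict I01)

lemma ae_mem_square : ∀ᵐ p ∂volumeSquare, p ∈ I01 ×ˢ I01 := by
  rw [volumeSquare, Measure.prod_restrict]
  exact ae_restrict_mem (measurableSet_I01.prod measurableSet_I01)

lemma integrable_of_abs_le_on_square {F : ℝ × ℝ → ℝ} (hF : Measurable F) {C : ℝ}
    (hC : ∀ p ∈ I01 ×ˢ I01, |F p| ≤ C) : Integrable F volumeSquare :=
  Integrable.of_bound hF.aestronglyMeasurable C (ae_mem_square.mono fun p hp => (hC p hp :))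

lemma abs_integral_le_of_abs_le_on_square {F : ℝ × ℝ → ℝ} {C : ℝ}
    (hC : ∀ p ∈ I01 ×ˢ I01, |F p| ≤ C) : |∫ p, F p ∂volumeSquare| ≤ C := by
  simpa using norm_integral_le_of_norm_le_const (f := F)
    (ae_mem_square.mono fun p hp => (hC p hp :))

namespace FracPartition

variable {q : ℕ}

lemma ext {ρ σ : FracPartition q} (h : ρ.toFun = σ.toFun) : ρ = σ := by
  cases ρ; cases σ; subst h; rfl

variable (ρ : FracPartition q)

lemma nonneg (i : Fin q) {x : ℝ} (hx : x ∈ I01) : 0 ≤ ρ.toFun i x := (ρ.mem_I01 i x hx).1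

lemma le_one (i : Fin q) {x : ℝ} (hx : x ∈ I01) : ρ.toFun i x ≤ 1 := (ρ.mem_I01 i x hx).2

lemma abs_le_one (i : Fin q) {x : ℝ} (hx : x ∈ I01) : |ρ.toFun i x| ≤ 1 :=
  abs_le.2 ⟨by linarith [ρ.nonneg i hx], ρ.le_one i hx⟩

lemma integrableOn (i : Fin q) : IntegrableOn (ρ.toFun i) I01 :=
  Integrable.of_bound (ρ.measurable i).aestronglyMeasurable 1
    (ae_restrict_of_forall_mem measurableSet_I01 fun _ hx => ρ.abs_le_one i hx)

def mass (i : Fin q) : ℝ := ∫ x in I01, ρ.toFun i x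

lemma isDist_mass : IsDist ρ.mass := by
  refine ⟨fun i => setIntegral_nonneg measurableSet_I01 fun _ hx => ρ.nonneg i hx, ?_⟩
  simp only [mass]
  rw [← integral_finsetSum _ fun i _ => ρ.integrableOn i,
    setIntegral_congr_fun measurableSet_I01 ρ.sum_one]
  simp

def const (a : Fin q → ℝ) (ha : IsDist a) : FracPartition q where
  toFun i _ := a i
  measurable _ := measurable_const
  mem_I01 i _ _ := ⟨ha.1 i, ha.2 ▸ single_le_sum (fun j _ => ha.1 j) (mem_univ i)⟩
  sum_one _ _ := ha.2

lemma mass_const (a : Fin q → ℝ) (ha : IsDist a) : (const a ha).mass = a := by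
  ext i; simp [mass, const]

def convexComb (s : ℝ) (hs0 : 0 ≤ s) (hs1 : s ≤ 1) (σ : FracPartition q) : FracPartition q where
  toFun i x := (1 - s) * ρ.toFun i x + s * σ.toFun i x
  measurable i := ((ρ.measurable i).const_mul _).add ((σ.measurable i).const_mul _)
  mem_I01 i x hx := by
    have := ρ.nonneg i hx; have := ρ.le_one i hx
    have := σ.nonneg i hx; have := σ.le_one i hx
    constructor <;> nlinarith
  sum_one x hx := by
    rw [sum_add_distrib, ← mul_sum, ← mul_sum, ρ.sum_one x hx, σ.sum_one x hx]; ring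

lemma mass_convexComb (s : ℝ) (hs0 : 0 ≤ s) (hs1 : s ≤ 1) (σ : FracPartition q) (i : Fin q) :
    (ρ.convexComb s hs0 hs1 σ).mass i = (1 - s) * ρ.mass i + s * σ.mass i := by
  simp only [mass, convexComb]
  rw [integral_add ((ρ.integrableOn i).const_mul _) ((σ.integrableOn i).const_mul _),
    integral_const_mul, integral_const_mul]

lemma abs_convexComb_sub_le (s : ℝ) (hs0 : 0 ≤ s) (hs1 : s ≤ 1) (σ : FracPartition q)
    (i : Fin q) {x : ℝ} (hx : x ∈ I01) :
    |(ρ.convexComb s hs0 hs1 σ).toFun i x - ρ.toFun i x| ≤ s := by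
  have h : (ρ.convexComb s hs0 hs1 σ).toFun i x - ρ.toFun i x =
      s * (σ.toFun i x - ρ.toFun i x) := by simp only [convexComb]; ring
  rw [h, abs_mul, abs_of_nonneg hs0]
  have := ρ.nonneg i hx; have := ρ.le_one i hx
  have := σ.nonneg i hx; have := σ.le_one i hx
  exact mul_le_of_le_one_right hs0 (abs_le.2 ⟨by linarith, by linarith⟩)

end FracPartition

section EnergyDensity

variable {ι κ : Type*} [Fintype ι] [Fintype κ] {W : ℝ → ℝ → ℝ}

def energyDensity (W : ℝ → ℝ → ℝ) (J : Matrix ι ι ℝ) (u : ι → ℝ → ℝ) (p : ℝ × ℝ) : ℝ :=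
  ∑ i, ∑ j, J i j * (u i p.1 * u j p.2 * W p.1 p.2)

lemma sum_fiberwise_apply {M : Type*} [AddCommMonoid M] [DecidableEq κ] (φ : ι → κ)
    (f : κ → ι → M) : ∑ k, ∑ i with φ i = k, f k i = ∑ i, f (φ i) i := by
  rw [← sum_fiberwise univ φ fun i => f (φ i) i]
  exact sum_congr rfl fun k _ => sum_congr rfl fun i hi => by rw [(mem_filter.1 hi).2]

lemma energyDensity_submatrix [DecidableEq κ] (J : Matrix κ κ ℝ) (φ : ι → κ)
    (u : ι → ℝ → ℝ) (p : ℝ × ℝ) :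
    energyDensity W (J.submatrix φ φ) u p =
      energyDensity W J (fun k x => ∑ i with φ i = k, u i x) p := by
  set g : ι → ι → ℝ := fun i j => u i p.1 * u j p.2 * W p.1 p.2
  calc energyDensity W (J.submatrix φ φ) u p
      = ∑ i, ∑ l, ∑ j with φ j = l, J (φ i) l * g i j :=
        sum_congr rfl fun i _ => (sum_fiberwise_apply φ fun l j => J (φ i) l * g i j).symm
    _ = ∑ k, ∑ i with φ i = k, ∑ l, ∑ j with φ j = l, J k l * g i j :=
        (sum_fiberwise_apply φ fun k i => ∑ l, ∑ j with φ j = l, J k l * g i j).symm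
    _ = _ := by
        simp only [energyDensity, g, sum_mul, mul_sum]
        refine sum_congr rfl fun k _ => ?_
        rw [sum_comm]
        exact sum_congr rfl fun l _ => sum_comm

lemma abs_sum_sum_mul_le (J : Matrix ι ι ℝ) (X : ι → ι → ℝ) {B : ℝ} (hX : ∀ i j, |X i j| ≤ B) :
    |∑ i, ∑ j, J i j * X i j| ≤ (∑ i, ∑ j, |J i j|) * B := by
  refine (abs_sum_le_sum_abs _ _).trans ?_
  rw [sum_mul]
  refine sum_le_sum fun i _ => (abs_sum_le_sum_abs _ _).trans ?_
  rw [sum_mul]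
  refine sum_le_sum fun j _ => ?_
  rw [abs_mul]
  exact mul_le_mul_of_nonneg_left (hX i j) (abs_nonneg _)

lemma abs_mul_sub_mul_le {a b c d : ℝ} (hb : |b| ≤ 1) (hc : |c| ≤ 1) :
    |a * b - c * d| ≤ |a - c| + |b - d| := by
  calc |a * b - c * d| = |(a - c) * b + c * (b - d)| := by ring_nf
    _ ≤ |a - c| * |b| + |c| * |b - d| := by
        rw [← abs_mul, ← abs_mul]; exact abs_add_le _ _
    _ ≤ |a - c| + |b - d| := by
        gcongr
        · exact mul_le_of_le_one_right (abs_nonneg _) hb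
        · exact mul_le_of_le_one_left (abs_nonneg _) hc

lemma abs_energyDensity_sub_le {M : ℝ} (hWM : ∀ x y, |W x y| ≤ M) (J : Matrix ι ι ℝ)
    {u v : ι → ℝ → ℝ} (hu : ∀ i, ∀ x ∈ I01, |u i x| ≤ 1) (hv : ∀ i, ∀ x ∈ I01, |v i x| ≤ 1)
    {s : ℝ} (huv : ∀ i, ∀ x ∈ I01, |u i x - v i x| ≤ s) {p : ℝ × ℝ} (hp : p ∈ I01 ×ˢ I01) :
    |energyDensity W J u p - energyDensity W J v p| ≤ (∑ i, ∑ j, |J i j|) * (2 * s * M) := by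
  simp only [energyDensity, ← sum_sub_distrib, ← mul_sub]
  refine abs_sum_sum_mul_le J _ fun i j => ?_
  have hs : 0 ≤ s := (abs_nonneg _).trans (huv i _ hp.1)
  rw [← sub_mul, abs_mul, two_mul]
  exact mul_le_mul (abs_mul_sub_mul_le (hu j _ hp.2) (hv i _ hp.1) |>.trans
    (add_le_add (huv i _ hp.1) (huv j _ hp.2))) (hWM _ _) (abs_nonneg _) (by linarith)

end EnergyDensity

section Energy

variable {q : ℕ} {W : ℝ → ℝ → ℝ} {M : ℝ}

lemma integrable_energyTerm (hWm : Measurable (uncurry W)) (hWM : ∀ x y, |W x y| ≤ M)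
    (ρ : FracPartition q) (i j : Fin q) :
    Integrable (fun p : ℝ × ℝ => ρ.toFun i p.1 * ρ.toFun j p.2 * W p.1 p.2) volumeSquare := by
  refine integrable_of_abs_le_on_square (C := M) ((((ρ.measurable i).comp measurable_fst).mul
    ((ρ.measurable j).comp measurable_snd)).mul hWm) fun p hp => ?_
  rw [abs_mul, abs_mul]
  exact (mul_le_of_le_one_left (abs_nonneg _) (mul_le_one₀ (ρ.abs_le_one i hp.1) (abs_nonneg _)
    (ρ.abs_le_one j hp.2))).trans (hWM _ _)

lemma integrable_energyDensity (hWm : Measurable (uncurry W)) (hWM : ∀ x y, |W x y| ≤ M)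
    (J : Matrix (Fin q) (Fin q) ℝ) (ρ : FracPartition q) :
    Integrable (energyDensity W J ρ.toFun) volumeSquare :=
  integrable_finsetSum _ fun i _ => integrable_finsetSum _ fun j _ =>
    (integrable_energyTerm hWm hWM ρ i j).const_mul _

lemma energy_eq_neg_integral (hWm : Measurable (uncurry W)) (hWM : ∀ x y, |W x y| ≤ M)
    (J : Matrix (Fin q) (Fin q) ℝ) (ρ : FracPartition q) :
    energy W J ρ = -∫ p, energyDensity W J ρ.toFun p ∂volumeSquare := by
  have hint := integrable_energyTerm hWm hWM ρ
  simp only [energy, energyDensity]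
  rw [integral_finsetSum _ fun i _ =>
    integrable_finsetSum _ fun j _ => (hint i j).const_mul (J i j)]
  congr 1
  refine sum_congr rfl fun i _ => ?_
  rw [integral_finsetSum _ fun j _ => (hint i j).const_mul (J i j)]
  refine sum_congr rfl fun j _ => ?_
  rw [integral_const_mul, integral_prod _ (hint i j)]

lemma abs_energy_sub_le (hWm : Measurable (uncurry W)) (hWM : ∀ x y, |W x y| ≤ M)
    (J : Matrix (Fin q) (Fin q) ℝ) (ρ σ : FracPartition q) {s : ℝ}
    (h : ∀ i, ∀ x ∈ I01, |ρ.toFun i x - σ.toFun i x| ≤ s) :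
    |energy W J ρ - energy W J σ| ≤ (∑ i, ∑ j, |J i j|) * (2 * s * M) := by
  rw [energy_eq_neg_integral hWm hWM, energy_eq_neg_integral hWm hWM, neg_sub_neg,
    ← integral_sub (integrable_energyDensity hWm hWM J σ) (integrable_energyDensity hWm hWM J ρ)]
  refine abs_integral_le_of_abs_le_on_square fun p hp => ?_
  rw [abs_sub_comm]
  exact abs_energyDensity_sub_le hWM J (fun i _ => ρ.abs_le_one i) (fun i _ => σ.abs_le_one i) h hp

lemma neg_le_energy (hWm : Measurable (uncurry W)) (hWM : ∀ x y, |W x y| ≤ M)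
    (J : Matrix (Fin q) (Fin q) ℝ) (ρ : FracPartition q) :
    -((∑ i, ∑ j, |J i j|) * (2 * M)) ≤ energy W J ρ := by
  have h := abs_integral_le_of_abs_le_on_square (F := energyDensity W J ρ.toFun) fun p hp => by
    simpa [energyDensity] using abs_energyDensity_sub_le hWM J (fun i _ => ρ.abs_le_one i)
      (v := 0) (by simp) (s := 1) (by simpa using fun i _ => ρ.abs_le_one i) hp
  rw [energy_eq_neg_integral hWm hWM]
  linarith [(abs_le.1 h).2]

end Energy

section InfimumOverPartitions

variable {q : ℕ} {W : ℝ → ℝ → ℝ} {M : ℝ} (J : Matrix (Fin q) (Fin q) ℝ)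

lemma mgse_mass_le_energy (hWm : Measurable (uncurry W)) (hWM : ∀ x y, |W x y| ≤ M)
    (ρ : FracPartition q) : mgse W J ρ.mass ≤ energy W J ρ :=
  csInf_le ⟨_, by rintro _ ⟨σ, -, rfl⟩; exact neg_le_energy hWm hWM J σ⟩ ⟨ρ, fun _ => rfl, rfl⟩

lemma neg_le_mgse (hWm : Measurable (uncurry W)) (hWM : ∀ x y, |W x y| ≤ M) {a : Fin q → ℝ}
    (ha : IsDist a) : -((∑ i, ∑ j, |J i j|) * (2 * M)) ≤ mgse W J a :=
  le_csInf ⟨_, FracPartition.const a ha, congrFun (FracPartition.mass_const a ha), rfl⟩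
    (by rintro _ ⟨σ, -, rfl⟩; exact neg_le_energy hWm hWM J σ)

lemma ltgseV_le_energy (hWm : Measurable (uncurry W)) (hWM : ∀ x y, |W x y| ≤ M)
    {x : Fin q → ℝ} (ρ : FracPartition q) (hx : ∀ i, x i ≤ ρ.mass i) :
    ltgseV W J x ≤ energy W J ρ :=
  calc ltgseV W J x ≤ mgse W J ρ.mass :=
        csInf_le ⟨_, by rintro _ ⟨a, ha, -, rfl⟩; exact neg_le_mgse J hWm hWM ha⟩
          ⟨ρ.mass, ρ.isDist_mass, hx, rfl⟩
    _ ≤ energy W J ρ := mgse_mass_le_energy J hWm hWM ρ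

lemma le_ltgseV {x : Fin q → ℝ} {e : ℝ} (hx : ∃ a, IsDist a ∧ ∀ i, x i ≤ a i)
    (h : ∀ ρ : FracPartition q, (∀ i, x i ≤ ρ.mass i) → e ≤ energy W J ρ) :
    e ≤ ltgseV W J x := by
  obtain ⟨a, ha, hxa⟩ := hx
  unfold ltgseV
  refine le_csInf ⟨_, a, ha, hxa, rfl⟩ ?_
  rintro _ ⟨b, hb, hxb, rfl⟩
  unfold mgse
  refine le_csInf ⟨_, FracPartition.const b hb, congrFun (FracPartition.mass_const b hb), rfl⟩ ?_
  rintro _ ⟨ρ, hρ, rfl⟩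
  exact h ρ fun i => (hxb i).trans (hρ i).ge

lemma exists_energy_lt_ltgseV_add {x : Fin q → ℝ} (hx : ∃ a, IsDist a ∧ ∀ i, x i ≤ a i)
    {ε : ℝ} (hε : 0 < ε) :
    ∃ ρ : FracPartition q, (∀ i, x i ≤ ρ.mass i) ∧ energy W J ρ < ltgseV W J x + ε := by
  by_contra! h
  linarith [le_ltgseV J hx h]

end InfimumOverPartitions

lemma sum_fiber_div_card {ι κ : Type*} [Fintype ι] [DecidableEq κ] {φ : ι → κ} {k : κ}
    (hk : ∃ α, φ α = k) (v : κ → ℝ) :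
    ∑ α with φ α = k, v (φ α) / #{β | φ β = φ α} = v k := by
  have hcard : (#{β | φ β = k} : ℝ) ≠ 0 := by
    obtain ⟨α, hα⟩ := hk
    exact Nat.cast_ne_zero.2 (card_pos.2 ⟨α, by simp [hα]⟩).ne'
  rw [sum_congr rfl fun α hα => by rw [(mem_filter.1 hα).2], sum_const, nsmul_eq_mul,
    mul_div_cancel₀ _ hcard]

namespace FracPartition

variable {q N : ℕ} (φ : Fin N → Fin q)

def merge (ρ : FracPartition N) : FracPartition q where
  toFun i x := ∑ α with φ α = i, ρ.toFun α x
  measurable i := Finset.measurable_fun_sum _ fun α _ => ρ.measurable α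
  mem_I01 i x hx := ⟨sum_nonneg fun α _ => ρ.nonneg α hx, ρ.sum_one x hx ▸
    sum_le_sum_of_subset_of_nonneg (filter_subset _ _) fun α _ _ => ρ.nonneg α hx⟩
  sum_one x hx := by rw [sum_fiberwise]; exact ρ.sum_one x hx

lemma mass_merge (ρ : FracPartition N) (i : Fin q) :
    (ρ.merge φ).mass i = ∑ α with φ α = i, ρ.mass α := by
  simp only [mass, merge]
  exact integral_finsetSum _ fun α _ => ρ.integrableOn α

def split (hφ : Surjective φ) (ρ : FracPartition q) : FracPartition N where
  toFun α x := ρ.toFun (φ α) x / #{β | φ β = φ α}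
  measurable α := (ρ.measurable _).div_const _
  mem_I01 α x hx := ⟨div_nonneg (ρ.nonneg _ hx) (Nat.cast_nonneg _),
    div_le_one_of_le₀ ((ρ.le_one _ hx).trans (Nat.one_le_cast.2 (card_pos.2 ⟨α, by simp⟩)))
      (Nat.cast_nonneg _)⟩
  sum_one x hx := by
    rw [← sum_fiberwise univ φ]
    exact (sum_congr rfl fun i _ => sum_fiber_div_card (hφ i) (ρ.toFun · x)).trans
      (ρ.sum_one x hx)

lemma mass_split (hφ : Surjective φ) (ρ : FracPartition q) (α : Fin N) :
    (ρ.split φ hφ).mass α = ρ.mass (φ α) / #{β | φ β = φ α} :=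
  integral_div _ _

lemma merge_split (hφ : Surjective φ) (ρ : FracPartition q) : (ρ.split φ hφ).merge φ = ρ :=
  ext <| funext₂ fun i x => sum_fiber_div_card (hφ i) (ρ.toFun · x)

end FracPartition

section Blowup

variable {q N : ℕ} {W : ℝ → ℝ → ℝ} {M : ℝ} (J : Matrix (Fin q) (Fin q) ℝ) (φ : Fin N → Fin q)

lemma energy_submatrix (hWm : Measurable (uncurry W)) (hWM : ∀ x y, |W x y| ≤ M)
    (σ : FracPartition N) : energy W (J.submatrix φ φ) σ = energy W J (σ.merge φ) := by
  rw [energy_eq_neg_integral hWm hWM, energy_eq_neg_integral hWm hWM]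
  simp only [energyDensity_submatrix]
  rfl

lemma energy_split (hWm : Measurable (uncurry W)) (hWM : ∀ x y, |W x y| ≤ M)
    (hφ : Surjective φ) (ρ : FracPartition q) :
    energy W (J.submatrix φ φ) (ρ.split φ hφ) = energy W J ρ := by
  rw [energy_submatrix J φ hWm hWM, FracPartition.merge_split]

lemma isDist_uniform (hN : 0 < N) : IsDist (fun _ : Fin N => 1 / (N : ℝ)) :=
  ⟨fun _ => by positivity, by simp [hN.ne']⟩

lemma ltgse_le_ltgse_submatrix (hWm : Measurable (uncurry W)) (hWM : ∀ x y, |W x y| ≤ M)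
    (hN : 0 < N) {c c' : ℝ} (hc' : c' ≤ 1 / N) (hc : ∀ i, c ≤ #{α | φ α = i} * c') :
    ltgse W J c ≤ ltgse W (J.submatrix φ φ) c' :=
  le_ltgseV _ ⟨_, isDist_uniform hN, fun _ => hc'⟩ fun σ hσ => by
    rw [energy_submatrix J φ hWm hWM]
    refine ltgseV_le_energy J hWm hWM _ fun i => (hc i).trans ?_
    rw [FracPartition.mass_merge]
    simpa using card_nsmul_le_sum _ _ c' fun α _ => hσ α

lemma ltgse_submatrix_le_energy (hWm : Measurable (uncurry W)) (hWM : ∀ x y, |W x y| ≤ M)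
    (hφ : Surjective φ) {c' : ℝ} (ρ : FracPartition q)
    (h : ∀ i, #{α | φ α = i} * c' ≤ ρ.mass i) :
    ltgse W (J.submatrix φ φ) c' ≤ energy W J ρ := by
  rw [← energy_split J φ hWm hWM hφ ρ]
  refine ltgseV_le_energy _ hWm hWM _ fun α => ?_
  rw [FracPartition.mass_split, le_div_iff₀ (Nat.cast_pos.2 (card_pos.2 ⟨α, by simp⟩))]
  linarith [h (φ α)]

end Blowup

lemma exists_nat_sum_eq_abs_sub_le {ι : Type*} [Fintype ι] [DecidableEq ι] (i₀ : ι) {N : ℕ}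
    {y : ι → ℝ} (hy : ∀ i, 0 ≤ y i) (hsum : ∑ i, y i = N) :
    ∃ m : ι → ℕ, ∑ i, m i = N ∧ ∀ i, |(m i : ℝ) - y i| ≤ Fintype.card ι := by
  set S := ∑ i ∈ univ.erase i₀, ⌊y i⌋₊
  have hfloor : ∀ i, (⌊y i⌋₊ : ℝ) ≤ y i ∧ y i - 1 < ⌊y i⌋₊ := fun i =>
    ⟨Nat.floor_le (hy i), by linarith [Nat.lt_floor_add_one (y i)]⟩
  have hrest : (N : ℝ) - S - y i₀ = ∑ i ∈ univ.erase i₀, (y i - ⌊y i⌋₊) := by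
    rw [← hsum, ← add_sum_erase _ _ (mem_univ i₀), sum_sub_distrib]
    push_cast [S]
    ring
  have hrest0 : 0 ≤ (N : ℝ) - S - y i₀ :=
    hrest ▸ sum_nonneg fun i _ => sub_nonneg.2 (hfloor i).1
  have hSN : S ≤ N := by exact_mod_cast (show (S : ℝ) ≤ N by linarith [hy i₀])
  refine ⟨update (fun i => ⌊y i⌋₊) i₀ (N - S), ?_, fun i => ?_⟩
  · rw [sum_update_of_mem (mem_univ i₀), sdiff_singleton_eq_erase]
    omega
  rcases eq_or_ne i i₀ with rfl | hi
  · rw [update_self, Nat.cast_sub hSN, abs_of_nonneg hrest0, hrest]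
    calc ∑ j ∈ univ.erase i, (y j - ⌊y j⌋₊) ≤ ∑ j ∈ univ.erase i, (1 : ℝ) :=
          sum_le_sum fun j _ => by linarith [(hfloor j).2]
      _ ≤ Fintype.card ι := by simp
  · rw [update_of_ne hi, abs_sub_comm, abs_of_nonneg (sub_nonneg.2 (hfloor i).1)]
    have : (1 : ℝ) ≤ Fintype.card ι := Nat.one_le_cast.2 (Fintype.card_pos_iff.2 ⟨i⟩)
    linarith [(hfloor i).2]

section Thresholds

variable {q : ℕ} {h₁ h₂ s : ℝ}

/-- Interpolating between the threshold vector `h₁ / q` (total mass `h₁`) and the mixture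
`(1 - s) a + s / q` (total mass `1`) gives total mass exactly `h₂`, while the uniform part of
the mixture keeps every coordinate a fixed distance above the threshold. -/
lemma exists_between_threshold_and_mixture (hq : 0 < q) (h12 : h₁ < h₂) (h2 : h₂ ≤ 1)
    (hs0 : 0 < s) (hs1 : s ≤ 1) {a : Fin q → ℝ} (ha : IsDist a) (hah : ∀ i, h₁ / q ≤ a i) :
    ∃ x : Fin q → ℝ, ∑ i, x i = h₂ ∧
      ∀ i, h₁ / q + s * (h₂ - h₁) / q ≤ x i ∧ x i ≤ (1 - s) * a i + s / q := by
  have hq' : (0 : ℝ) < q := Nat.cast_pos.2 hq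
  have hh₁ : 0 < 1 - h₁ := by linarith
  set t := (h₂ - h₁) / (1 - h₁)
  have ht : t * (1 - h₁) = h₂ - h₁ := div_mul_cancel₀ _ hh₁.ne'
  have ht1 : t ≤ 1 := (div_le_one hh₁).2 (by linarith)
  have hgap : ∀ i, s * (1 - h₁) / q ≤ (1 - s) * a i + s / q - h₁ / q := fun i => by
    have : (1 - s) * (h₁ / q) ≤ (1 - s) * a i := mul_le_mul_of_nonneg_left (hah i) (by linarith)
    have : s * (1 - h₁) / q = s / q - s * (h₁ / q) := by ring
    linarith
  refine ⟨fun i => h₁ / q + t * ((1 - s) * a i + s / q - h₁ / q), ?_, fun i => ⟨?_, ?_⟩⟩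
  · simp only [sum_add_distrib, ← mul_sum, sum_sub_distrib, sum_const, card_univ,
      Fintype.card_fin, nsmul_eq_mul, ha.2]
    field_simp
    linarith
  · have := mul_le_mul_of_nonneg_left (hgap i) (div_nonneg (by linarith) hh₁.le : 0 ≤ t)
    calc h₁ / q + s * (h₂ - h₁) / q = h₁ / q + t * (s * (1 - h₁) / q) := by
          rw [← ht]; ring
      _ ≤ _ := by linarith
  · nlinarith [hgap i, mul_nonneg hs0.le hh₁.le, div_nonneg (mul_nonneg hs0.le hh₁.le) hq'.le]

lemma exists_nat_thresholds (hq : 0 < q) (h1 : 0 ≤ h₁) (h12 : h₁ < h₂) (h2 : h₂ ≤ 1)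
    (hs0 : 0 < s) (hs1 : s ≤ 1) :
    ∃ N : ℕ, 0 < N ∧ ∀ a : Fin q → ℝ, IsDist a → (∀ i, h₁ / q ≤ a i) →
      ∃ m : Fin q → ℕ, ∑ i, m i = N ∧ (∀ i, h₁ / q < m i * (h₂ / N)) ∧
        ∃ c, IsDist c ∧ ∀ i, m i * (h₂ / N) ≤ (1 - s) * a i + s * c i := by
  have hq' : (0 : ℝ) < q := Nat.cast_pos.2 hq
  have hh₂ : 0 < h₂ := by linarith
  set δ := s * (h₂ - h₁) / (2 * q) with hδdef
  have hδ : 0 < δ := div_pos (mul_pos hs0 (by linarith)) (by positivity)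
  obtain ⟨N, hN⟩ := exists_nat_gt (q * h₂ / δ)
  have hN' : (0 : ℝ) < N := lt_trans (by positivity) hN
  have hqN : q * (h₂ / N) < δ := by
    rw [← mul_div_assoc, div_lt_iff₀ hN']
    rw [div_lt_iff₀ hδ] at hN
    linarith
  refine ⟨N, Nat.cast_pos.1 hN', fun a ha hah => ?_⟩
  obtain ⟨x, hxsum, hx⟩ := exists_between_threshold_and_mixture hq h12 h2 hs0 hs1 ha hah
  have hx0 : ∀ i, 0 ≤ x i := fun i => by
    have := (hx i).1; have : 0 ≤ h₁ / q := by positivity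
    have : 0 ≤ s * (h₂ - h₁) / q := div_nonneg (mul_nonneg hs0.le (by linarith)) hq'.le
    linarith
  obtain ⟨m, hm, hmx⟩ := exists_nat_sum_eq_abs_sub_le (⟨0, hq⟩ : Fin q)
    (y := fun i => N * x i / h₂) (fun i => by have := hx0 i; positivity)
    (by rw [← sum_div, ← mul_sum, hxsum, mul_div_cancel_right₀ _ hh₂.ne'])
  have hclose : ∀ i, |m i * (h₂ / N) - x i| < δ := fun i => by
    have h := hmx i
    rw [Fintype.card_fin] at h
    calc |m i * (h₂ / N) - x i| = h₂ / N * |m i - N * x i / h₂| := by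
          rw [← abs_of_pos (div_pos hh₂ hN'), ← abs_mul, abs_of_pos (div_pos hh₂ hN')]
          congr 1; field_simp
      _ ≤ h₂ / N * q := mul_le_mul_of_nonneg_left h (by positivity)
      _ < δ := by linarith
  have hsum : ∑ i, (m i : ℝ) * (h₂ / N) = h₂ := by
    rw [← sum_mul, ← Nat.cast_sum, hm, mul_div_cancel₀ _ hN'.ne']
  -- The mixing weights `c` absorb the rounding errors `m i * (h₂ / N) - x i`.
  refine ⟨m, hm, fun i => ?_, fun i => (m i * (h₂ / N) - x i) / s + 1 / q, ⟨fun i => ?_, ?_⟩,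
    fun i => ?_⟩
  · have : 2 * δ = s * (h₂ - h₁) / q := by rw [hδdef]; field_simp
    linarith [(hx i).1, (abs_lt.1 (hclose i)).1]
  · have : δ / s ≤ 1 / q := by
      rw [hδdef, div_le_iff₀ hs0, div_le_iff₀ (by positivity)]
      field_simp
      nlinarith
    have := div_lt_div_of_pos_right (abs_lt.1 (hclose i)).1 hs0
    rw [neg_div] at this
    linarith
  · simp only [sum_add_distrib, ← sum_div, sum_sub_distrib, hsum, hxsum, sub_self, zero_div,
      sum_const, card_univ, Fintype.card_fin, nsmul_eq_mul]
    simp [hq'.ne']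
  · rw [mul_add, mul_div_cancel₀ _ hs0.ne', mul_one_div]
    linarith [(hx i).2]

end Thresholds

lemma exists_fin_fiber_card {q : ℕ} (m : Fin q → ℕ) :
    ∃ φ : Fin (∑ i, m i) → Fin q, ∀ i, #{α | φ α = i} = m i := by
  refine ⟨fun α => (finSigmaFinEquiv.symm α).1, fun i => ?_⟩
  rw [← Fintype.card_subtype, Fintype.card_congr ((finSigmaFinEquiv.symm.subtypeEquiv
    fun _ => Iff.rfl).trans (Equiv.sigmaSubtype i)), Fintype.card_fin]

lemma exists_submatrix_ltgse_le {q : ℕ} (hq : 0 < q) (J : Matrix (Fin q) (Fin q) ℝ)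
    {h₁ h₂ : ℝ} (h1 : 0 ≤ h₁) (h12 : h₁ < h₂) (h2 : h₂ ≤ 1) {M : ℝ} (hM : 0 ≤ M) {ε : ℝ}
    (hε : 0 < ε) :
    ∃ N : ℕ, 0 < N ∧ ∀ W : ℝ → ℝ → ℝ, Measurable (uncurry W) → (∀ x y, |W x y| ≤ M) →
      ∃ φ : Fin N → Fin q, (∀ i, h₁ / q ≤ #{α | φ α = i} * (h₂ / N)) ∧
        ltgse W (J.submatrix φ φ) (h₂ / N) ≤ ltgse W J (h₁ / q) + ε := by
  set K := (∑ i, ∑ j, |J i j|) * (2 * M)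
  have hK : 0 ≤ K := by positivity
  obtain ⟨s, hs0, hs1, hsK⟩ : ∃ s, 0 < s ∧ s ≤ 1 ∧ s * K < ε / 2 := by
    obtain ⟨c, hc0, hc⟩ := exists_pos_mul_lt (half_pos hε) K
    refine ⟨min 1 c, lt_min one_pos hc0, min_le_left _ _, ?_⟩
    nlinarith [mul_le_mul_of_nonneg_right (min_le_right 1 c) hK]
  obtain ⟨N, hN, hround⟩ := exists_nat_thresholds hq h1 h12 h2 hs0 hs1
  refine ⟨N, hN, fun W hWm hWM => ?_⟩
  have hq' : (0 : ℝ) < q := Nat.cast_pos.2 hq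
  obtain ⟨ρ, hρ, hρε⟩ := exists_energy_lt_ltgseV_add (W := W) J (x := fun _ => h₁ / q)
    ⟨_, isDist_uniform hq, fun _ => div_le_div_of_nonneg_right (by linarith) hq'.le⟩
    (half_pos hε)
  obtain ⟨m, rfl, hmh, c, hc, hmc⟩ := hround ρ.mass ρ.isDist_mass hρ
  obtain ⟨φ, hφ⟩ := exists_fin_fiber_card m
  have hsurj : Surjective φ := fun i => by
    have hm : 0 < m i := Nat.pos_of_ne_zero fun h => by
      have := hmh i
      rw [h, Nat.cast_zero, zero_mul] at this
      linarith [div_nonneg h1 hq'.le]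
    obtain ⟨α, hα⟩ := card_pos.1 (hφ i ▸ hm)
    exact ⟨α, (mem_filter.1 hα).2⟩
  set σ := ρ.convexComb s hs0.le hs1 (FracPartition.const c hc)
  refine ⟨φ, fun i => hφ i ▸ (hmh i).le, ?_⟩
  calc ltgse W (J.submatrix φ φ) (h₂ / ↑(∑ i, m i)) ≤ energy W J σ :=
        ltgse_submatrix_le_energy J φ hWm hWM hsurj σ fun i => by
          rw [hφ, FracPartition.mass_convexComb, FracPartition.mass_const]
          exact hmc i
    _ ≤ energy W J ρ + s * K := by
        have := abs_energy_sub_le hWm hWM J σ ρ fun i x hx =>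
          ρ.abs_convexComb_sub_le s hs0.le hs1 _ i hx
        have hcost : (∑ i, ∑ j, |J i j|) * (2 * s * M) = s * K := by ring
        linarith [(abs_le.1 this).2]
    _ ≤ ltgse W J (h₁ / q) + ε := by
        have : ltgse W J (h₁ / q) = ltgseV W J fun _ => h₁ / q := rfl
        linarith

lemma cauchySeq_of_forall_abs_sub_le {u : ℕ → ℝ}
    (h : ∀ ε > 0, ∃ v : ℕ → ℝ, CauchySeq v ∧ ∀ n, |u n - v n| ≤ ε) : CauchySeq u := by
  refine Metric.cauchySeq_iff.2 fun ε hε => ?_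
  obtain ⟨v, hv, huv⟩ := h (ε / 3) (by positivity)
  obtain ⟨N, hN⟩ := Metric.cauchySeq_iff.1 hv (ε / 3) (by positivity)
  refine ⟨N, fun m hm n hn => ?_⟩
  have hvmn := abs_lt.1 (Real.dist_eq _ _ ▸ hN m hm n hn)
  obtain ⟨hm₁, hm₂⟩ := abs_le.1 (huv m)
  obtain ⟨hn₁, hn₂⟩ := abs_le.1 (huv n)
  rw [Real.dist_eq, abs_lt]
  constructor <;> linarith [hvmn.1, hvmn.2]

theorem stmt11 (lo hi : ℝ) (W : ℕ → ℝ → ℝ → ℝ)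
    (hW : ∀ n, IsGraphon (W n)) (hWI : ∀ n x y, W n x y ∈ Set.Icc lo hi)
    (h₁ h₂ : ℝ) (h1 : 0 ≤ h₁) (h12 : h₁ < h₂) (h2 : h₂ ≤ 1)
    (hconv : ∀ q : ℕ, 1 ≤ q → ∀ J : Matrix (Fin q) (Fin q) ℝ, J.IsSymm →
      ∃ L : ℝ, Tendsto (fun n => ltgse (W n) J (h₂ / q)) atTop (nhds L)) :
    ∀ q : ℕ, 1 ≤ q → ∀ J : Matrix (Fin q) (Fin q) ℝ, J.IsSymm →
      ∃ L : ℝ, Tendsto (fun n => ltgse (W n) J (h₁ / q)) atTop (nhds L) := by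
  intro q hq J hJ
  classical
  have hWm : ∀ n, Measurable (uncurry (W n)) := fun n => (hW n).1
  have hWM : ∀ n x y, |W n x y| ≤ max |lo| |hi| := fun n x y =>
    abs_le_max_abs_abs (hWI n x y).1 (hWI n x y).2
  refine cauchySeq_tendsto_of_complete (cauchySeq_of_forall_abs_sub_le fun ε hε => ?_)
  obtain ⟨N, hN, happrox⟩ := exists_submatrix_ltgse_le hq J h1 h12 h2
    ((abs_nonneg lo).trans (le_max_left _ _)) hε
  set S := ({φ | ∀ i, h₁ / q ≤ #{α | φ α = i} * (h₂ / N)} : Finset (Fin N → Fin q))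
  have hS : S.Nonempty :=
    let ⟨φ, hφ, _⟩ := happrox (W 0) (hWm 0) (hWM 0)
    ⟨φ, mem_filter.2 ⟨mem_univ _, hφ⟩⟩
  refine ⟨fun n => S.inf' hS fun φ => ltgse (W n) (J.submatrix φ φ) (h₂ / N), ?_, fun n => ?_⟩
  · choose L hL using fun φ : Fin N → Fin q => hconv N hN (J.submatrix φ φ) (hJ.submatrix φ)
    exact ((Tendsto.finset_inf'_nhds hS fun φ _ => hL φ).congr fun n =>
      Finset.inf'_apply hS _ n).cauchySeq
  obtain ⟨φ, hφ, hφε⟩ := happrox (W n) (hWm n) (hWM n)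
  have hle : ltgse (W n) J (h₁ / q) ≤ S.inf' hS fun φ => ltgse (W n) (J.submatrix φ φ) (h₂ / N) :=
    le_inf' hS _ fun ψ hψ => ltgse_le_ltgse_submatrix J ψ (hWm n) (hWM n) hN
      (div_le_div_of_nonneg_right h2 (Nat.cast_nonneg _)) (mem_filter.1 hψ).2
  have hge := inf'_le (fun φ => ltgse (W n) (J.submatrix φ φ) (h₂ / N))
    (mem_filter.2 ⟨mem_univ φ, hφ⟩ : φ ∈ S)
  exact abs_le.2 ⟨by linarith, by linarith⟩
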